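/- arXiv:1005.3486 — 3 statements merged into one kernel-verified Lean document; each statement's English description precedes it below -/
import Mathlib

section
/- Let H ∈ 𝔽₂^{n×n} be a w-regular matrix whose Tanner graph is connected, let m ≥ 1, and let H̃ = H ⊗ J_m ∈ 𝔽₂^{mn×mn}, where J_m is the m×m all-ones matrix. Let μ₂ be the second largest eigenvalue of the real matrix HᵀH. Then every nonzero pseudocodeword x ∈ K(H̃) satisfies w_AWGNC(x) ≥ n·(2w − mμ₂)/(w² − μ₂). -/
open Matrix BigOperators Finset

section Defs

variable {J I : Type*} [Fintype J] [Fintype I] [DecidableEq I]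

/-- The support of row `j` of a binary matrix `H`. -/
def rowSupp (H : Matrix J I (ZMod 2)) (j : J) : Finset I :=
  Finset.univ.filter fun i => H j i = 1

/-- The fundamental cone of a binary matrix `H`. -/
def fundCone (H : Matrix J I (ZMod 2)) : Set (I → ℝ) :=
  {x | (∀ i, 0 ≤ x i) ∧
    ∀ j : J, ∀ ℓ ∈ rowSupp H j, x ℓ ≤ ∑ i ∈ (rowSupp H j).erase ℓ, x i}

/-- BEC pseudoweight: size of the support. -/
noncomputable def wBEC (x : I → ℝ) : ℝ := ({i | x i ≠ 0}.ncard : ℝ)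

/-- AWGNC pseudoweight. -/
noncomputable def wAWGNC (x : I → ℝ) : ℝ := (∑ i, x i) ^ 2 / ∑ i, x i ^ 2

/-- Max-fractional weight. -/
noncomputable def wMaxFrac (x : I → ℝ) : ℝ := (∑ i, x i) / sSup (Set.range x)

/-- `H` is a parity-check matrix of the code `C`. -/
def IsParityCheck (H : Matrix J I (ZMod 2)) (C : Submodule (ZMod 2) (I → ZMod 2)) : Prop :=
  ∀ c, c ∈ C ↔ H.mulVec c = 0

/-- Minimum Hamming distance of a code. -/
noncomputable def minDist (C : Submodule (ZMod 2) (I → ZMod 2)) : ℕ :=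
  sInf {d | ∃ c ∈ C, c ≠ 0 ∧ hammingNorm c = d}

/-- Minimum pseudoweight of `H` w.r.t. pseudoweight function `w`:
the infimum of `w` over all nonzero pseudocodewords (`⊤` if there are none). -/
noncomputable def minPW (w : (I → ℝ) → ℝ) (H : Matrix J I (ZMod 2)) : EReal :=
  sInf ((fun x => (w x : EReal)) '' (fundCone H \ {0}))

/-- The chain (connectivity) relation associated with a binary matrix whose rows
have weight 2: `i` and `i'` are related iff they are equal or joined by a chain of rows
whose supports are exactly consecutive pairs. -/
def chainRel (H : Matrix J I (ZMod 2)) (i i' : I) : Prop :=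
  i = i' ∨ ∃ ℓ : ℕ, 1 ≤ ℓ ∧ ∃ (c : Fin (ℓ + 1) → I) (r : Fin ℓ → J),
    c 0 = i ∧ c (Fin.last ℓ) = i' ∧
    ∀ t : Fin ℓ, rowSupp H (r t) = {c t.castSucc, c t.succ}

/-- The 0-1 real matrix associated with a binary matrix. -/
def toRealMatrix (H : Matrix J I (ZMod 2)) : Matrix J I ℝ :=
  Matrix.of fun j i => if H j i = 1 then (1 : ℝ) else 0

/-- The Tanner graph of a binary matrix. -/
def tannerGraph (H : Matrix J I (ZMod 2)) : SimpleGraph (J ⊕ I) :=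
  SimpleGraph.fromRel fun u v => ∃ j i, u = Sum.inl j ∧ v = Sum.inr i ∧ H j i = 1

end Defs

/-- The multiset of (real) eigenvalues, with multiplicity, of a real square matrix:
the real roots of its characteristic polynomial. -/
noncomputable def eigMult {ι : Type*} [Fintype ι] [DecidableEq ι] (A : Matrix ι ι ℝ) :
    Multiset ℝ :=
  A.charpoly.roots

section FinDefs

variable {n : ℕ}

/-- The non-increasing rearrangement of a real vector. -/
noncomputable def sortDesc (x : Fin n → ℝ) : Fin n → ℝ :=
  fun i => x (Tuple.sort (fun j => -x j) i)

/-- `Φ(ξ) = ∫₀^ξ φ`, where `φ(ξ) = x'_i` for `i - 1 < ξ ≤ i` and `x'` is the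
non-increasing rearrangement of `x`. -/
noncomputable def bigPhi (x : Fin n → ℝ) (ξ : ℝ) : ℝ :=
  ∑ i : Fin n, sortDesc x i * min 1 (max 0 (ξ - (i : ℝ)))

/-- BSC pseudoweight: `2 Φ⁻¹(Φ(n)/2)`. -/
noncomputable def wBSC (x : Fin n → ℝ) : ℝ :=
  2 * sInf {ξ : ℝ | bigPhi x (n : ℝ) / 2 ≤ bigPhi x ξ}

/-- The pseudocodeword redundancy of a code `C` w.r.t. the pseudoweight function `w`:
the smallest number of rows of a parity-check matrix `H` of `C` whose minimum
pseudoweight equals the minimum distance of `C` (`⊤` if there is no such matrix). -/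
noncomputable def pcRedundancy (w : (Fin n → ℝ) → ℝ)
    (C : Submodule (ZMod 2) (Fin n → ZMod 2)) : ℕ∞ :=
  sInf {k : ℕ∞ | ∃ (m : ℕ) (H : Matrix (Fin m) (Fin n) (ZMod 2)),
    k = (m : ℕ∞) ∧ IsParityCheck H C ∧ minPW w H = ((minDist C : ℝ) : EReal)}

end FinDefs

/-!
Let `L` be the real incidence matrix of `H` and `y i = ∑ b, x (i, b)` the block sums of `x`.
Every row `(j, a)` of `H ⊗ J_m` has support `I_j × [m]`, so the cone inequalities give
`2 x (i, b) ≤ (L y) j` for `i ∈ I_j`; multiplying by `x (i, b)` and summing (each column of `H`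
has weight `w`) yields `2 w ‖x‖² ≤ ‖L y‖² = yᵀ (LᵀL) y`. The all-ones vector is an eigenvector
of `LᵀL` for `w²`, and all eigenvalues lie in `[0, w²]` (positive semidefiniteness and
Gershgorin), so expanding `y` in an orthonormal eigenbasis gives
`n · yᵀ (LᵀL) y ≤ w² S² + μ₂ (n ‖y‖² - S²)` with `S = ∑ x`. Cauchy–Schwarz on each block gives
`‖y‖² ≤ m ‖x‖²`, and together `n (2w - m μ₂) ‖x‖² ≤ (w² - μ₂) S²`. When `μ₂ = w²` the claimed
bound is `0` because division by zero is `0` in Lean.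
-/

section Spectral

variable {ι : Type*} [Fintype ι] [DecidableEq ι]

-- The spectral bound below in eigen-coordinates: `e` are the eigenvalues, `d` and `c` the
-- coordinates of the eigenvector `v` for `ρ` and of an arbitrary vector `y`.
lemma sum_sq_mul_sum_mul_sq_le_of_simple {e d c : ι → ℝ} {ρ μ : ℝ}
    (hd : ∀ k, e k * d k = ρ * d k) (hle : ∀ k, e k ≠ ρ → e k ≤ μ)
    (hsimple : ∀ k k', e k = ρ → e k' = ρ → k = k') :
    (∑ k, d k ^ 2) * ∑ k, e k * c k ^ 2 ≤
      ρ * (∑ k, d k * c k) ^ 2 + μ * ((∑ k, d k ^ 2) * ∑ k, c k ^ 2 - (∑ k, d k * c k) ^ 2) := by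
  have hd0 : ∀ k, e k ≠ ρ → d k = 0 := fun k hk =>
    (mul_eq_zero.mp (by linear_combination hd k : (e k - ρ) * d k = 0)).resolve_left
      (sub_ne_zero.mpr hk)
  by_cases htop : ∃ k₀, e k₀ = ρ
  · obtain ⟨k₀, hk₀⟩ := htop
    have hne : ∀ k, k ≠ k₀ → e k ≠ ρ := fun k hk he => hk (hsimple k k₀ he hk₀)
    have hdd : ∑ k, d k ^ 2 = d k₀ ^ 2 :=
      Fintype.sum_eq_single k₀ fun k hk => by simp [hd0 k (hne k hk)]
    have hdc : ∑ k, d k * c k = d k₀ * c k₀ :=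
      Fintype.sum_eq_single k₀ fun k hk => by simp [hd0 k (hne k hk)]
    have hrest : ∑ k ∈ univ.erase k₀, e k * c k ^ 2 ≤ μ * ∑ k ∈ univ.erase k₀, c k ^ 2 := by
      rw [mul_sum]
      exact sum_le_sum fun k hk =>
        mul_le_mul_of_nonneg_right (hle k (hne k (ne_of_mem_erase hk))) (sq_nonneg _)
    rw [hdd, hdc, ← add_sum_erase _ _ (mem_univ k₀), ← add_sum_erase _ _ (mem_univ k₀), hk₀]
    nlinarith [mul_le_mul_of_nonneg_left hrest (sq_nonneg (d k₀))]
  · simp [hd0 _ fun h => htop ⟨_, h⟩]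

variable {A : Matrix ι ι ℝ}

lemma Matrix.IsHermitian.eigMult_eq_map_eigenvalues (hA : A.IsHermitian) :
    eigMult A = univ.val.map hA.eigenvalues := by
  simp [eigMult, hA.roots_charpoly_eq_eigenvalues, RCLike.ofReal_real_eq_id]

lemma Matrix.IsHermitian.eigenvalues_le_of_ne (hA : A.IsHermitian) {ρ μ : ℝ}
    (hμ : ∀ x ∈ (eigMult A).erase ρ, x ≤ μ) {k : ι} (hk : hA.eigenvalues k ≠ ρ) :
    hA.eigenvalues k ≤ μ :=
  hμ _ <| (Multiset.mem_erase_of_ne hk).mpr <|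
    hA.eigMult_eq_map_eigenvalues ▸ Multiset.mem_map_of_mem _ (mem_univ k)

lemma Matrix.IsHermitian.eq_of_eigenvalues_eq (hA : A.IsHermitian) {ρ μ : ℝ}
    (hμ : ∀ x ∈ (eigMult A).erase ρ, x ≤ μ) (hμρ : μ < ρ) {k k' : ι}
    (hk : hA.eigenvalues k = ρ) (hk' : hA.eigenvalues k' = ρ) : k = k' := by
  by_contra hne
  refine hμρ.not_ge (hμ ρ ?_)
  rw [hA.eigMult_eq_map_eigenvalues, ← hk,
    ← Multiset.map_erase_of_mem _ _ (mem_val.mpr (mem_univ k))]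
  exact Multiset.mem_map.mpr ⟨k', (Multiset.mem_erase_of_ne (Ne.symm hne)).mpr (mem_univ k'),
    hk'.trans hk.symm⟩

theorem Matrix.IsHermitian.mul_dotProduct_mulVec_le (hA : A.IsHermitian) {v : ι → ℝ} {ρ μ : ℝ}
    (hv : A *ᵥ v = ρ • v) (hμ : ∀ x ∈ (eigMult A).erase ρ, x ≤ μ) (hμρ : μ < ρ) (y : ι → ℝ) :
    (v ⬝ᵥ v) * (y ⬝ᵥ A *ᵥ y) ≤
      ρ * (v ⬝ᵥ y) ^ 2 + μ * ((v ⬝ᵥ v) * (y ⬝ᵥ y) - (v ⬝ᵥ y) ^ 2) := by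
  set U : Matrix ι ι ℝ := (hA.eigenvectorUnitary : Matrix ι ι ℝ)
  set e := hA.eigenvalues
  have hU : U * Uᵀ = 1 := by
    simpa [U, star_eq_conjTranspose] using Unitary.coe_mul_star_self hA.eigenvectorUnitary
  have hA_diag : A = U * diagonal e * Uᵀ := by
    simpa [U, star_eq_conjTranspose, RCLike.ofReal_real_eq_id] using hA.spectral_theorem
  have parseval (u u' : ι → ℝ) : u ⬝ᵥ u' = ∑ k, (Uᵀ *ᵥ u) k * (Uᵀ *ᵥ u') k := by
    rw [← dotProduct, mulVec_transpose, ← dotProduct_mulVec, mulVec_mulVec, hU, one_mulVec]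
  have quad : y ⬝ᵥ A *ᵥ y = ∑ k, e k * (Uᵀ *ᵥ y) k ^ 2 := by
    rw [hA_diag, ← mulVec_mulVec, ← mulVec_mulVec, dotProduct_mulVec, ← mulVec_transpose]
    simp only [dotProduct, mulVec_diagonal]
    exact sum_congr rfl fun k _ => by ring
  have eig (k : ι) : e k * (Uᵀ *ᵥ v) k = ρ * (Uᵀ *ᵥ v) k := by
    have h : Uᵀ *ᵥ (A *ᵥ v) = diagonal e *ᵥ (Uᵀ *ᵥ v) := by
      rw [hA_diag, mulVec_mulVec, mulVec_mulVec, ← Matrix.mul_assoc, ← Matrix.mul_assoc,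
        mul_eq_one_comm.mp hU, Matrix.one_mul]
    simpa [hv, mulVec_smul, mulVec_diagonal] using (congrFun h k).symm
  simp only [parseval v v, parseval v y, parseval y y, quad, ← sq]
  exact sum_sq_mul_sum_mul_sq_le_of_simple eig (fun k => hA.eigenvalues_le_of_ne hμ)
    fun k k' => hA.eq_of_eigenvalues_eq hμ hμρ

lemma Matrix.hasEigenvalue_toLin'_of_mem_eigMult {μ : ℝ}
    (hμ : μ ∈ eigMult A) : Module.End.HasEigenvalue (toLin' A) μ := by
  rw [Module.End.hasEigenvalue_iff_isRoot_charpoly, charpoly_toLin']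
  exact (Polynomial.mem_roots'.mp hμ).2

lemma le_of_mem_eigMult_of_nonneg_of_mulVec_one {r μ : ℝ}
    (hA : ∀ i j, 0 ≤ A i j) (hA1 : A *ᵥ 1 = r • 1) (hμ : μ ∈ eigMult A) : μ ≤ r := by
  obtain ⟨k, hk⟩ := eigenvalue_mem_ball (hasEigenvalue_toLin'_of_mem_eigMult hμ)
  rw [Metric.mem_closedBall, Real.dist_eq] at hk
  have hoff : ∑ j ∈ univ.erase k, ‖A k j‖ = r - A k k := by
    have hrow : ∑ j, A k j = r := by simpa [mulVec, dotProduct] using congrFun hA1 k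
    rw [← hrow, ← add_sum_erase _ _ (mem_univ k)]
    simp [Real.norm_of_nonneg (hA k _)]
  linarith [le_abs_self (μ - A k k)]

lemma nonneg_of_mem_eigMult_transpose_mul_self {κ : Type*} [Fintype κ] (L : Matrix κ ι ℝ)
    {μ : ℝ} (hμ : μ ∈ eigMult (Lᵀ * L)) : 0 ≤ μ := by
  have hA : (Lᵀ * L).IsHermitian := by simpa using isHermitian_conjTranspose_mul_self L
  obtain ⟨k, -, rfl⟩ := Multiset.mem_map.mp (hA.eigMult_eq_map_eigenvalues ▸ hμ)
  simpa using eigenvalues_conjTranspose_mul_self_nonneg L k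

end Spectral

section TannerMatrix

variable {J I : Type*} {H : Matrix J I (ZMod 2)}

lemma toRealMatrix_nonneg (j : J) (i : I) : 0 ≤ toRealMatrix H j i := by
  simp only [toRealMatrix, of_apply]
  split_ifs <;> simp

lemma toRealMatrix_mulVec_apply [Fintype I] (y : I → ℝ) (j : J) :
    (toRealMatrix H *ᵥ y) j = ∑ i ∈ rowSupp H j, y i := by
  simp [toRealMatrix, mulVec, dotProduct, rowSupp, sum_filter]

lemma toRealMatrix_mulVec_one [Fintype I] {w : ℕ} (hrow : ∀ j, (rowSupp H j).card = w) :
    toRealMatrix H *ᵥ 1 = (w : ℝ) • 1 := by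
  ext j
  simp [toRealMatrix_mulVec_apply, hrow]

lemma one_vecMul_toRealMatrix [Fintype J] {w : ℕ}
    (hcol : ∀ i, (univ.filter fun j => H j i = 1).card = w) :
    1 ᵥ* toRealMatrix H = (w : ℝ) • 1 := by
  rw [← mulVec_transpose]
  exact toRealMatrix_mulVec_one (H := Hᵀ) hcol

lemma two_mul_le_sum_rowSupp_of_mem_fundCone [Fintype I] [DecidableEq I] {x : I → ℝ}
    (hx : x ∈ fundCone H) {j : J} {ℓ : I} (hℓ : ℓ ∈ rowSupp H j) :
    2 * x ℓ ≤ ∑ i ∈ rowSupp H j, x i := by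
  linarith [hx.2 j ℓ hℓ, add_sum_erase (rowSupp H j) x hℓ]

variable {K : Type*} [Fintype K]

lemma rowSupp_kroneckerMap_ones [Fintype I] (j : J) (a : K) :
    rowSupp (kroneckerMap (· * ·) H (of fun _ _ => 1 : Matrix K K (ZMod 2))) (j, a) =
      rowSupp H j ×ˢ univ := by
  ext ⟨i, b⟩
  simp [rowSupp]

theorem two_mul_sum_sq_le_of_mem_fundCone_kroneckerMap [Fintype J] [Fintype I] [DecidableEq I]
    [DecidableEq K] {w : ℕ} (hcol : ∀ i, (univ.filter fun j => H j i = 1).card = w) {x : I × K → ℝ}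
    (hx : x ∈ fundCone (kroneckerMap (· * ·) H (of fun _ _ => 1 : Matrix K K (ZMod 2)))) :
    2 * w * ∑ p, x p ^ 2 ≤ ∑ j, (toRealMatrix H *ᵥ fun i => ∑ b, x (i, b)) j ^ 2 := by
  have hrow_bound (j : J) : 2 * (toRealMatrix H *ᵥ fun i => ∑ b, x (i, b) ^ 2) j ≤
      (toRealMatrix H *ᵥ fun i => ∑ b, x (i, b)) j ^ 2 := by
    set s := (toRealMatrix H *ᵥ fun i => ∑ b, x (i, b)) j with hs
    rw [toRealMatrix_mulVec_apply] at hs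
    have hblock (i : I) (hi : i ∈ rowSupp H j) (b : K) : 2 * x (i, b) ≤ s := by
      have hmem : (i, b) ∈
          rowSupp (kroneckerMap (· * ·) H (of fun _ _ => 1 : Matrix K K (ZMod 2))) (j, b) := by
        simpa [rowSupp_kroneckerMap_ones] using hi
      simpa [rowSupp_kroneckerMap_ones, sum_product, ← hs] using
        two_mul_le_sum_rowSupp_of_mem_fundCone hx hmem
    calc 2 * (toRealMatrix H *ᵥ fun i => ∑ b, x (i, b) ^ 2) j
        = ∑ i ∈ rowSupp H j, ∑ b, x (i, b) * (2 * x (i, b)) := by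
          simp only [toRealMatrix_mulVec_apply, mul_sum]
          exact sum_congr rfl fun i _ => sum_congr rfl fun b _ => by ring
      _ ≤ ∑ i ∈ rowSupp H j, ∑ b, x (i, b) * s :=
          sum_le_sum fun i hi => sum_le_sum fun b _ =>
            mul_le_mul_of_nonneg_left (hblock i hi b) (hx.1 _)
      _ = s ^ 2 := by simp only [← sum_mul, ← hs, sq]
  calc 2 * w * ∑ p, x p ^ 2
      = 2 * (1 ⬝ᵥ toRealMatrix H *ᵥ fun i => ∑ b, x (i, b) ^ 2) := by
        rw [dotProduct_mulVec, one_vecMul_toRealMatrix hcol, smul_dotProduct, one_dotProduct,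
          Fintype.sum_prod_type, smul_eq_mul, mul_assoc]
    _ ≤ ∑ j, (toRealMatrix H *ᵥ fun i => ∑ b, x (i, b)) j ^ 2 := by
        rw [one_dotProduct, mul_sum]
        exact sum_le_sum fun j _ => hrow_bound j

end TannerMatrix

lemma sum_sq_sum_le_card_mul_sum_sq {I K : Type*} [Fintype I] [Fintype K] (x : I × K → ℝ) :
    ∑ i, (∑ b, x (i, b)) ^ 2 ≤ Fintype.card K * ∑ p, x p ^ 2 := by
  rw [Fintype.sum_prod_type, mul_sum]
  exact sum_le_sum fun i _ => sq_sum_le_card_mul_sum_sq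

theorem statement13_general {n m : ℕ} (H : Matrix (Fin n) (Fin n) (ZMod 2)) (w : ℕ)
    (hrow : ∀ j, (rowSupp H j).card = w)
    (hcol : ∀ i, (Finset.univ.filter fun j => H j i = 1).card = w)
    (Ht : Matrix (Fin n × Fin m) (Fin n × Fin m) (ZMod 2))
    (hHt : Ht = Matrix.kroneckerMap (· * ·) H (Matrix.of fun _ _ => (1 : ZMod 2)))
    (μ₂ : ℝ)
    (hμ₂ : μ₂ ∈ (eigMult ((toRealMatrix H)ᵀ * toRealMatrix H)).erase ((w : ℝ) ^ 2) ∧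
      ∀ x ∈ (eigMult ((toRealMatrix H)ᵀ * toRealMatrix H)).erase ((w : ℝ) ^ 2), x ≤ μ₂) :
    ∀ x ∈ fundCone Ht \ {0},
      (n : ℝ) * (2 * (w : ℝ) - (m : ℝ) * μ₂) / ((w : ℝ) ^ 2 - μ₂) ≤ wAWGNC x := by
  rintro x ⟨hx, hx0⟩
  subst hHt
  set L := toRealMatrix H
  set y : Fin n → ℝ := fun i => ∑ b, x (i, b)
  have hA : (Lᵀ * L).IsHermitian := by simpa using isHermitian_conjTranspose_mul_self L
  have hA1 : (Lᵀ * L) *ᵥ 1 = ((w : ℝ) ^ 2) • 1 := by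
    rw [← mulVec_mulVec, toRealMatrix_mulVec_one hrow, mulVec_smul, mulVec_transpose,
      one_vecMul_toRealMatrix hcol, smul_smul, sq]
  have hμ₂_mem : μ₂ ∈ eigMult (Lᵀ * L) := Multiset.mem_of_mem_erase hμ₂.1
  have hμ₂_nonneg := nonneg_of_mem_eigMult_transpose_mul_self L hμ₂_mem
  have hA_nonneg (i j : Fin n) : 0 ≤ (Lᵀ * L) i j := by
    rw [mul_apply]
    exact sum_nonneg fun k _ => mul_nonneg (toRealMatrix_nonneg k i) (toRealMatrix_nonneg k j)
  have hμ₂_le := le_of_mem_eigMult_of_nonneg_of_mulVec_one hA_nonneg hA1 hμ₂_mem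
  have hP : 0 < ∑ p, x p ^ 2 := by
    obtain ⟨p, hp⟩ := Function.ne_iff.mp hx0
    exact sum_pos' (fun p _ => sq_nonneg _) ⟨p, mem_univ p, sq_pos_of_ne_zero hp⟩
  rw [wAWGNC, Fintype.sum_prod_type, ← one_dotProduct y]
  rcases hμ₂_le.lt_or_eq with hlt | heq
  · have hQ : y ⬝ᵥ (Lᵀ * L) *ᵥ y = ∑ j, (L *ᵥ y) j ^ 2 := by
      rw [← mulVec_mulVec, dotProduct_mulVec, vecMul_transpose]
      simp [dotProduct, sq]
    have hcone := two_mul_sum_sq_le_of_mem_fundCone_kroneckerMap hcol hx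
    have hspec := hA.mul_dotProduct_mulVec_le hA1 hμ₂.2 hlt y
    have hCS : y ⬝ᵥ y ≤ m * ∑ p, x p ^ 2 := by
      simpa [dotProduct, sq] using sum_sq_sum_le_card_mul_sum_sq x
    rw [one_dotProduct_one, Fintype.card_fin, hQ] at hspec
    rw [div_le_div_iff₀ (sub_pos.mpr hlt) hP]
    nlinarith [mul_le_mul_of_nonneg_left hcone (Nat.cast_nonneg n),
      mul_le_mul_of_nonneg_left hCS (mul_nonneg hμ₂_nonneg (Nat.cast_nonneg n))]
  · rw [heq, sub_self, div_zero]
    positivity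

/-- Let `H` be an `n × n` `w`-regular binary matrix with connected Tanner
graph, `m ≥ 1`, and `H̃ = H ⊗ J_m` (Kronecker product with the `m × m` all-ones matrix,
over `𝔽₂`).  Let `μ₂` be the second largest eigenvalue (with multiplicity) of the real
matrix `HᵀH` (whose largest eigenvalue is `w²`).  Then every nonzero pseudocodeword
`x ∈ K(H̃)` satisfies `w_AWGNC(x) ≥ n (2w - m μ₂) / (w² - μ₂)`. -/
theorem statement13 {n m : ℕ} (hm : 1 ≤ m) (H : Matrix (Fin n) (Fin n) (ZMod 2)) (w : ℕ)
    (hrow : ∀ j, (rowSupp H j).card = w)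
    (hcol : ∀ i, (Finset.univ.filter fun j => H j i = 1).card = w)
    (hconn : (tannerGraph H).Connected)
    (Ht : Matrix (Fin n × Fin m) (Fin n × Fin m) (ZMod 2))
    (hHt : Ht = Matrix.kroneckerMap (· * ·) H (Matrix.of fun _ _ => (1 : ZMod 2)))
    (μ₂ : ℝ)
    (hμ₂ : μ₂ ∈ (eigMult ((toRealMatrix H)ᵀ * toRealMatrix H)).erase ((w : ℝ) ^ 2) ∧
      ∀ x ∈ (eigMult ((toRealMatrix H)ᵀ * toRealMatrix H)).erase ((w : ℝ) ^ 2), x ≤ μ₂) :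
    ∀ x ∈ fundCone Ht \ {0},
      (n : ℝ) * (2 * (w : ℝ) - (m : ℝ) * μ₂) / ((w : ℝ) ^ 2 - μ₂) ≤ wAWGNC x :=
  statement13_general H w hrow hcol Ht hHt μ₂ hμ₂
end

section
/- Let C ⊆ 𝔽₂⁸ be the extended Hamming code, i.e., the kernel of the 4×8 matrix over 𝔽₂ with rows (1,0,0,1,1,0,0,1), (0,1,0,1,0,1,0,1), (0,0,1,1,0,0,1,1), (1,1,1,1,0,0,0,0); C is an [8,4,4] code. Then for every parity-check matrix H of C, w_maxfrac^min(H) < 4 = d(C); consequently ρ_maxfrac(C) = ∞. -/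
open Matrix BigOperators Finset

/-- A 4×8 parity-check matrix of the [8,4,4] extended Hamming code. -/
def H18 : Matrix (Fin 4) (Fin 8) (ZMod 2) :=
  !![1,0,0,1,1,0,0,1;
     0,1,0,1,0,1,0,1;
     0,0,1,1,0,0,1,1;
     1,1,1,1,0,0,0,0]

/-- The [8,4,4] extended Hamming code, as the kernel of `H18`. -/
noncomputable def C18 : Submodule (ZMod 2) (Fin 8 → ZMod 2) :=
  LinearMap.ker H18.mulVecLin

set_option maxRecDepth 8000
set_option maxHeartbeats 1000000

lemma h18_weights : ∀ v : Fin 8 → ZMod 2, H18.mulVec v = 0 →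
    hammingNorm v = 0 ∨ hammingNorm v = 4 ∨ hammingNorm v = 8 := by decide

lemma h18_rows_mem : ∀ k : Fin 4, H18.mulVec (H18 k) = 0 := by decide

lemma mem_C18 {v : Fin 8 → ZMod 2} : v ∈ C18 ↔ H18.mulVec v = 0 := by
  simp [C18, LinearMap.mem_ker]

lemma rows_weight {m : ℕ} {H : Matrix (Fin m) (Fin 8) (ZMod 2)}
    (hpc : IsParityCheck H C18) (j : Fin m) :
    hammingNorm (H j) = 0 ∨ hammingNorm (H j) = 4 ∨ hammingNorm (H j) = 8 := by
  apply h18_weights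
  funext k
  have h0 : H.mulVec (H18 k) = 0 := (hpc (H18 k)).1 (mem_C18.mpr (h18_rows_mem k))
  have h1 := congrFun h0 j
  simpa [Matrix.mulVec, dotProduct, mul_comm] using h1

lemma rowSupp_card {J : Type*} [Fintype J] (H : Matrix J (Fin 8) (ZMod 2)) (j : J) :
    (rowSupp H j).card = hammingNorm (H j) := by
  unfold rowSupp hammingNorm
  congr 1
  have h : ∀ x : ZMod 2, x = 1 ↔ x ≠ 0 := by decide
  exact Finset.filter_congr (fun i _ => h (H j i))

noncomputable def xvec : Fin 8 → ℝ := fun i => if i = 0 then 1 else 1/3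

lemma xvec_nonneg : ∀ i, 0 ≤ xvec i := by
  intro i; unfold xvec; split <;> norm_num

lemma xvec_ge : ∀ i, (1/3 : ℝ) ≤ xvec i := by
  intro i; unfold xvec; split <;> norm_num

lemma xvec_le1 : ∀ i, xvec i ≤ 1 := by
  intro i; unfold xvec; split <;> norm_num

lemma xvec_sum : ∑ i, xvec i = 10/3 := by
  simp [xvec, Fin.sum_univ_eight]
  norm_num

lemma xvec_sup : sSup (Set.range xvec) = 1 :=
  IsGreatest.csSup_eq ⟨⟨0, by simp [xvec]⟩, by rintro y ⟨i, rfl⟩; exact xvec_le1 i⟩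

lemma xvec_wmf : wMaxFrac xvec = 10/3 := by
  rw [wMaxFrac, xvec_sum, xvec_sup, div_one]

lemma xvec_mem {m : ℕ} {H : Matrix (Fin m) (Fin 8) (ZMod 2)}
    (hpc : IsParityCheck H C18) : xvec ∈ fundCone H := by
  refine ⟨xvec_nonneg, ?_⟩
  intro j ℓ hℓ
  have hw := rows_weight hpc j
  rw [← rowSupp_card] at hw
  have hcard : 4 ≤ (rowSupp H j).card := by
    rcases hw with h | h | h
    · rw [Finset.card_eq_zero.mp h] at hℓ; exact absurd hℓ (Finset.notMem_empty ℓ)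
    · omega
    · omega
  have h3 : 3 ≤ ((rowSupp H j).erase ℓ).card := by
    rw [Finset.card_erase_of_mem hℓ]; omega
  have hs := Finset.card_nsmul_le_sum ((rowSupp H j).erase ℓ) xvec (1/3)
    (fun i _ => xvec_ge i)
  rw [nsmul_eq_mul] at hs
  calc xvec ℓ ≤ 1 := xvec_le1 ℓ
    _ ≤ (((rowSupp H j).erase ℓ).card : ℝ) * (1/3) := by
        have : (3 : ℝ) ≤ (((rowSupp H j).erase ℓ).card : ℝ) := by exact_mod_cast h3
        nlinarith
    _ ≤ ∑ i ∈ (rowSupp H j).erase ℓ, xvec i := hs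

lemma main18 : ∀ (m : ℕ) (H : Matrix (Fin m) (Fin 8) (ZMod 2)), IsParityCheck H C18 →
    minPW wMaxFrac H < ((4 : ℝ) : EReal) := by
  intro m H hpc
  have hx : xvec ∈ fundCone H \ {0} := by
    refine ⟨xvec_mem hpc, ?_⟩
    intro h
    have := congrFun (Set.mem_singleton_iff.mp h) 0
    simp [xvec] at this
  have hle : minPW wMaxFrac H ≤ ((10/3 : ℝ) : EReal) := by
    apply sInf_le
    exact ⟨xvec, hx, by dsimp only; rw [xvec_wmf]⟩
  exact lt_of_le_of_lt hle (EReal.coe_lt_coe_iff.mpr (by norm_num))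

lemma minDist_C18 : minDist C18 = 4 := by
  have h4 : (4 : ℕ) ∈ {d | ∃ c ∈ C18, c ≠ 0 ∧ hammingNorm c = d} :=
    ⟨H18 0, mem_C18.mpr (h18_rows_mem 0), by decide, by decide⟩
  refine le_antisymm (Nat.sInf_le h4) (le_csInf ⟨4, h4⟩ ?_)
  rintro d ⟨c, hc, hc0, rfl⟩
  rcases h18_weights c (mem_C18.mp hc) with h | h | h
  · exact absurd (hammingNorm_eq_zero.mp h) hc0
  · omega
  · omega

lemma finrank_C18 : Module.finrank (ZMod 2) C18 = 4 := by
  haveI : Fintype C18 := Fintype.ofFinite _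
  have hcard : Fintype.card C18 = 16 := by
    rw [Fintype.card_congr (Equiv.subtypeEquivRight (fun v => @mem_C18 v))]
    decide
  have h := Module.card_eq_pow_finrank (K := ZMod 2) (V := C18)
  rw [ZMod.card, hcard] at h
  have : (2:ℕ) ^ 4 = 2 ^ Module.finrank (ZMod 2) C18 := h
  exact (Nat.pow_right_injective (le_refl 2) this).symm

/-- The extended Hamming code `C = ker H18` is an [8,4,4] code, and for every
parity-check matrix `H` of `C` one has `w_maxfrac^min(H) < 4 = d(C)`; consequently
`ρ_maxfrac(C) = ∞`. -/
theorem statement18 :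
    Module.finrank (ZMod 2) C18 = 4 ∧
    minDist C18 = 4 ∧
    (∀ (m : ℕ) (H : Matrix (Fin m) (Fin 8) (ZMod 2)), IsParityCheck H C18 →
      minPW wMaxFrac H < ((4 : ℝ) : EReal)) ∧
    pcRedundancy wMaxFrac C18 = ⊤ := by
  refine ⟨finrank_C18, minDist_C18, main18, ?_⟩
  have hset : {k : ℕ∞ | ∃ (m : ℕ) (H : Matrix (Fin m) (Fin 8) (ZMod 2)),
      k = (m : ℕ∞) ∧ IsParityCheck H C18 ∧
      minPW wMaxFrac H = ((minDist C18 : ℝ) : EReal)} = ∅ := by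
    ext k
    simp only [Set.mem_setOf_eq, Set.mem_empty_iff_false, iff_false]
    rintro ⟨m, H, -, hpc, heq⟩
    have hlt := main18 m H hpc
    rw [heq, minDist_C18] at hlt
    norm_num at hlt
  rw [pcRedundancy, hset, sInf_empty]
end

section
/- Let H be the 4×4 matrix over 𝔽₂ with rows (1,1,0,0), (0,1,1,0), (1,0,1,0), (1,1,1,1). Then the vector x = (1,1,1,3) belongs to the fundamental cone K(H) and has max-fractional weight w_maxfrac(x) = 2, while the code C = ker H has minimum Hamming distance d(C) = 4 (its only nonzero codeword is (1,1,1,1)); in particular w_maxfrac^min(H) ≤ 2 < d(C). -/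
open Matrix BigOperators Finset

/-- The 4×4 matrix of the remark following Proposition `row_weight_2`. -/
def H19 : Matrix (Fin 4) (Fin 4) (ZMod 2) :=
  !![1,1,0,0;
     0,1,1,0;
     1,0,1,0;
     1,1,1,1]

/-- The code `C = ker H19`. -/
noncomputable def C19 : Submodule (ZMod 2) (Fin 4 → ZMod 2) :=
  LinearMap.ker H19.mulVecLin

theorem minPW_le_of_mem_fundCone {J I : Type*} [Fintype J] [Fintype I] [DecidableEq I]
    (w : (I → ℝ) → ℝ) {H : Matrix J I (ZMod 2)} {x : I → ℝ}
    (hx : x ∈ fundCone H) (hx0 : x ≠ 0) : minPW w H ≤ (w x : EReal) :=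
  sInf_le ⟨x, ⟨hx, hx0⟩, rfl⟩

theorem wMaxFrac_eq_of_forall_le {I : Type*} [Fintype I] {x : I → ℝ} {k : I}
    (hk : ∀ i, x i ≤ x k) :
    wMaxFrac x = (∑ i, x i) / x k := by
  have hmax : IsGreatest (Set.range x) (x k) := ⟨⟨k, rfl⟩, by rintro _ ⟨i, rfl⟩; exact hk i⟩
  rw [wMaxFrac, hmax.csSup_eq]

theorem minDist_eq_hammingNorm_of_unique {I : Type*} [Fintype I]
    {C : Submodule (ZMod 2) (I → ZMod 2)} {c₀ : I → ZMod 2}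
    (hc₀ : c₀ ∈ C) (hc₀0 : c₀ ≠ 0) (hC : ∀ c ∈ C, c = 0 ∨ c = c₀) :
    minDist C = hammingNorm c₀ := by
  have hweights : {d | ∃ c ∈ C, c ≠ 0 ∧ hammingNorm c = d} = {hammingNorm c₀} := by
    ext d
    constructor
    · rintro ⟨c, hc, hc0, rfl⟩
      rcases hC c hc with rfl | rfl
      · exact absurd rfl hc0
      · rfl
    · rintro rfl
      exact ⟨c₀, hc₀, hc₀0, rfl⟩
  rw [minDist, hweights, csInf_singleton]

theorem mem_C19_iff (c : Fin 4 → ZMod 2) : c ∈ C19 ↔ c = 0 ∨ c = ![1, 1, 1, 1] := by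
  rw [C19, LinearMap.mem_ker, Matrix.mulVecLin_apply]
  revert c
  decide

theorem mem_fundCone_H19 : (![1, 1, 1, 3] : Fin 4 → ℝ) ∈ fundCone H19 := by
  refine ⟨fun i => by fin_cases i <;> norm_num, fun j ℓ hℓ => ?_⟩
  rw [Finset.sum_erase_eq_sub hℓ]
  unfold rowSupp at *
  rw [Finset.sum_filter]
  simp only [Finset.mem_filter, Finset.mem_univ, true_and] at hℓ
  fin_cases j <;> fin_cases ℓ <;> simp_all [H19, Fin.sum_univ_four] <;> norm_num

theorem wMaxFrac_pseudocodeword_H19 : wMaxFrac (![1, 1, 1, 3] : Fin 4 → ℝ) = 2 := by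
  rw [wMaxFrac_eq_of_forall_le (k := 3) (fun i => by fin_cases i <;> simp)]
  norm_num [Fin.sum_univ_four, Matrix.cons_val_two, Matrix.cons_val_three]

theorem minDist_C19 : minDist C19 = 4 := by
  rw [minDist_eq_hammingNorm_of_unique ((mem_C19_iff _).2 (Or.inr rfl)) (by decide)
    fun c => (mem_C19_iff c).1]
  decide

/-- The vector `x = (1,1,1,3)` lies in the fundamental cone `K(H19)` and has
max-fractional weight 2, while `C = ker H19` has minimum Hamming distance 4 (its only
nonzero codeword being `(1,1,1,1)`); in particular `w_maxfrac^min(H19) ≤ 2 < d(C)`. -/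
theorem statement19 :
    (![1, 1, 1, 3] : Fin 4 → ℝ) ∈ fundCone H19 ∧
    wMaxFrac (![1, 1, 1, 3] : Fin 4 → ℝ) = 2 ∧
    (∀ c ∈ C19, c = 0 ∨ c = ![1, 1, 1, 1]) ∧
    minDist C19 = 4 ∧
    minPW wMaxFrac H19 ≤ ((2 : ℝ) : EReal) ∧
    ((2 : ℝ) : EReal) < ((minDist C19 : ℝ) : EReal) := by
  have hx0 : (![1, 1, 1, 3] : Fin 4 → ℝ) ≠ 0 := fun h => by simpa using congrFun h 0
  refine ⟨mem_fundCone_H19, wMaxFrac_pseudocodeword_H19, fun c => (mem_C19_iff c).1,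
    minDist_C19, ?_, ?_⟩
  · simpa only [wMaxFrac_pseudocodeword_H19] using
      minPW_le_of_mem_fundCone wMaxFrac mem_fundCone_H19 hx0
  · rw [minDist_C19]
    norm_num
end
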